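/- arXiv:1603.03976 — 3 statements merged into one kernel-verified Lean document; each statement's English description precedes it below -/
import Mathlib

section
/- Let Ω ⊂ ℝ³ be a bounded open set, T > 0, and C₀ > 0. Let f : ℝ³ → ℝ³ be continuous and satisfy z · f(z) ≥ 0 for all z with |z| ≥ C₀. Let u : (0,T] × Ω → ℝ³ be continuous, and let d : [0,T] × cl(Ω) → ℝ³ be continuous, with ∂_t d continuous and d twice continuously differentiable in the space variable on (0,T] × Ω, satisfying ∂_t d + (u · ∇) d = Δd − f(d) componentwise on (0,T] × Ω. Assume |d(0,x)| ≤ C₀ for all x ∈ cl(Ω) and |d(t,x)| ≤ C₀ for all t ∈ [0,T] and x ∈ ∂Ω. Then |d(t,x)| ≤ C₀ for all (t,x) ∈ [0,T] × cl(Ω). -/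
open Filter Topology


lemma aux_deriv_nonneg {g : ℝ → ℝ} {a t₀ : ℝ} (ha : a < t₀)
    (hmax : ∀ s ∈ Set.Icc a t₀, g s ≤ g t₀)
    (hg : DifferentiableAt ℝ g t₀) : 0 ≤ deriv g t₀ := by
  have hs : Tendsto (slope g t₀) (𝓝[≠] t₀) (𝓝 (deriv g t₀)) :=
    hasDerivAt_iff_tendsto_slope.mp hg.hasDerivAt
  have hs' : Tendsto (slope g t₀) (𝓝[<] t₀) (𝓝 (deriv g t₀)) :=
    hs.mono_left (nhdsWithin_mono _ fun x hx => ne_of_lt hx)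
  refine ge_of_tendsto hs' ?_
  have hmem : Set.Ioo a t₀ ∈ 𝓝[<] t₀ := Ioo_mem_nhdsLT_of_mem ⟨ha, le_refl _⟩
  filter_upwards [hmem] with s hs2
  rw [slope_def_field]
  have h1 : g s - g t₀ ≤ 0 := sub_nonpos.2 (hmax s ⟨hs2.1.le, hs2.2.le⟩)
  have h2 : s - t₀ < 0 := sub_neg.2 hs2.2
  exact div_nonneg_of_nonpos h1 h2.le

lemma aux_deriv2_nonpos {g : ℝ → ℝ} {a : ℝ}
    (hg : ∀ᶠ x in 𝓝 a, DifferentiableAt ℝ g x)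
    (hg2 : DifferentiableAt ℝ (deriv g) a)
    (hmax : IsLocalMax g a) : deriv (deriv g) a ≤ 0 := by
  by_contra hcon
  push_neg at hcon
  have h0 : deriv g a = 0 := hmax.deriv_eq_zero
  have hslope : Tendsto (slope (deriv g) a) (𝓝[≠] a) (𝓝 (deriv (deriv g) a)) :=
    hasDerivAt_iff_tendsto_slope.mp hg2.hasDerivAt
  have hev : ∀ᶠ x in 𝓝[≠] a, 0 < slope (deriv g) a x := hslope.eventually_const_lt hcon
  have hev2 : ∀ᶠ x in 𝓝[>] a, 0 < deriv g x := by
    have h' : ∀ᶠ x in 𝓝[>] a, 0 < slope (deriv g) a x :=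
      hev.filter_mono (nhdsWithin_mono _ fun x hx => ne_of_gt hx)
    filter_upwards [h', self_mem_nhdsWithin] with x hx hx'
    have hxa : 0 < x - a := sub_pos.2 hx'
    rw [slope_def_field, h0, sub_zero] at hx
    have h2 := mul_pos hx hxa
    rwa [div_mul_cancel₀ _ hxa.ne'] at h2
  obtain ⟨b, hb, hIoc⟩ := (mem_nhdsGT_iff_exists_Ioc_subset).mp hev2
  obtain ⟨δ₁, hδ₁, hball⟩ := Metric.eventually_nhds_iff.mp (hg.and hmax)
  set c := min b (a + δ₁ / 2) with hc
  have hac : a < c := lt_min hb (by linarith)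
  have hcball : ∀ x ∈ Set.Icc a c, dist x a < δ₁ := by
    intro x hx
    rw [Real.dist_eq, abs_lt]
    have h1 : x ≤ a + δ₁ / 2 := le_trans hx.2 (min_le_right _ _)
    constructor <;> linarith [hx.1]
  have hmono : StrictMonoOn g (Set.Icc a c) := by
    apply strictMonoOn_of_deriv_pos (convex_Icc a c)
    · intro x hx
      exact ((hball (hcball x hx)).1).continuousAt.continuousWithinAt
    · intro x hx
      rw [interior_Icc] at hx
      exact hIoc ⟨hx.1, le_trans hx.2.le (min_le_left _ _)⟩
  have h1 : g a < g c := hmono ⟨le_refl _, hac.le⟩ ⟨hac.le, le_refl _⟩ hac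
  have h2 : g c ≤ g a := (hball (hcball c ⟨hac.le, le_refl _⟩)).2
  linarith


/-- Spatial partial derivative `∂_j g (x)` of a scalar function on `ℝ³`
(Euclidean coordinates). -/
noncomputable def pdE (j : Fin 3) (g : EuclideanSpace ℝ (Fin 3) → ℝ)
    (x : EuclideanSpace ℝ (Fin 3)) : ℝ :=
  fderiv ℝ g x (EuclideanSpace.single j 1)

/-- **Maximum principle for the director equation (Lemma 2.2, `L^∞` bound).**
Let `Ω ⊂ ℝ³` be bounded open, `T > 0`, `C₀ > 0`, `f` continuous with `z · f(z) ≥ 0`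
for `|z| ≥ C₀`, `u` continuous on `(0,T] × Ω`, and `d` continuous on `[0,T] × cl Ω`,
with continuous time derivative and twice continuously spatially differentiable on
`(0,T] × Ω`, solving `∂_t d + (u·∇)d = Δd − f(d)` there. If `|d| ≤ C₀` at `t = 0` and
on the lateral boundary, then `|d| ≤ C₀` on all of `[0,T] × cl Ω`. -/
theorem stmt12 (Ω : Set (EuclideanSpace ℝ (Fin 3))) (hΩo : IsOpen Ω)
    (hΩb : Bornology.IsBounded Ω) (T C₀ : ℝ) (hT : 0 < T) (hC₀ : 0 < C₀)
    (f : EuclideanSpace ℝ (Fin 3) → EuclideanSpace ℝ (Fin 3)) (hf : Continuous f)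
    (hsign : ∀ z : EuclideanSpace ℝ (Fin 3), C₀ ≤ ‖z‖ → 0 ≤ (inner ℝ z (f z) : ℝ))
    (u : ℝ × EuclideanSpace ℝ (Fin 3) → EuclideanSpace ℝ (Fin 3))
    (hu : ContinuousOn u (Set.Ioc 0 T ×ˢ Ω))
    (d : ℝ × EuclideanSpace ℝ (Fin 3) → EuclideanSpace ℝ (Fin 3))
    (hd : ContinuousOn d (Set.Icc 0 T ×ˢ closure Ω))
    -- the time derivative ∂_t d exists and is continuous on (0,T] × Ω
    (hdt : ∀ p ∈ Set.Ioc 0 T ×ˢ Ω, ∀ k : Fin 3,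
      DifferentiableAt ℝ (fun s => d (s, p.2) k) p.1)
    (hdtc : ∀ k : Fin 3,
      ContinuousOn (fun p : ℝ × EuclideanSpace ℝ (Fin 3) =>
        deriv (fun s => d (s, p.2) k) p.1) (Set.Ioc 0 T ×ˢ Ω))
    -- d is twice continuously differentiable in the space variable on (0,T] × Ω
    (hdx : ∀ t ∈ Set.Ioc 0 T, ContDiffOn ℝ 2 (fun x => d (t, x)) Ω)
    -- the equation ∂_t d + (u·∇)d = Δd − f(d) holds componentwise on (0,T] × Ω
    (hpde : ∀ p ∈ Set.Ioc 0 T ×ˢ Ω, ∀ k : Fin 3,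
      deriv (fun s => d (s, p.2) k) p.1
        + (∑ j : Fin 3, u p j * pdE j (fun y => d (p.1, y) k) p.2)
      = (∑ j : Fin 3, pdE j (fun y => pdE j (fun z => d (p.1, z) k) y) p.2)
        - f (d p) k)
    (hinit : ∀ x ∈ closure Ω, ‖d (0, x)‖ ≤ C₀)
    (hbdry : ∀ t ∈ Set.Icc 0 T, ∀ x ∈ frontier Ω, ‖d (t, x)‖ ≤ C₀) :
    ∀ t ∈ Set.Icc 0 T, ∀ x ∈ closure Ω, ‖d (t, x)‖ ≤ C₀ := by
  intro t ht x hx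
  have hnormsq : ∀ z : EuclideanSpace ℝ (Fin 3), ∑ k : Fin 3, (z k)^2 = ‖z‖^2 := by
    intro z
    have h : ‖z‖^2 = ∑ k : Fin 3, ‖z k‖^2 := by
      rw [EuclideanSpace.norm_eq, Real.sq_sqrt (by positivity)]
    rw [h]
    simp [Real.norm_eq_abs, sq_abs]
  have key : ∀ ε : ℝ, 0 < ε → ‖d (t, x)‖^2 ≤ C₀^2 + ε * T := by
    intro ε hε
    set K : Set (ℝ × EuclideanSpace ℝ (Fin 3)) := Set.Icc 0 T ×ˢ closure Ω with hKdef
    have hKc : IsCompact K := isCompact_Icc.prod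
      (Metric.isCompact_of_isClosed_isBounded isClosed_closure hΩb.closure)
    have hKne : K.Nonempty := ⟨(t, x), Set.mk_mem_prod ht hx⟩
    have hψc : ContinuousOn (fun p : ℝ × EuclideanSpace ℝ (Fin 3) =>
        (∑ k : Fin 3, (d p k)^2) - ε * p.1) K := by
      apply ContinuousOn.sub
      · apply continuousOn_finset_sum
        intro k _
        exact ((EuclideanSpace.proj k).continuous.comp_continuousOn hd).pow 2
      · exact (continuous_const.mul continuous_fst).continuousOn
    obtain ⟨p₀, hp₀K, hp₀max'⟩ := hKc.exists_isMaxOn hKne hψc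
    obtain ⟨t₀, x₀⟩ := p₀
    have hp₀max : ∀ p ∈ K, (∑ k : Fin 3, (d p k)^2) - ε * p.1
        ≤ (∑ k : Fin 3, (d (t₀, x₀) k)^2) - ε * t₀ := fun p hp => hp₀max' hp
    obtain ⟨ht₀K, hx₀K⟩ := Set.mem_prod.mp hp₀K
    have hmain : (∑ k : Fin 3, (d (t₀, x₀) k)^2) - ε * t₀ ≤ C₀^2 := by
      by_contra hgt
      push_neg at hgt
      have ht₀0 : (0:ℝ) ≤ t₀ := ht₀K.1
      have hφ₀ : C₀^2 < ∑ k : Fin 3, (d (t₀, x₀) k)^2 := by nlinarith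
      have hnorm₀ : C₀ ≤ ‖d (t₀, x₀)‖ := by
        have h := hnormsq (d (t₀, x₀))
        nlinarith [norm_nonneg (d (t₀, x₀))]
      have ht₀pos : 0 < t₀ := by
        rcases ht₀0.lt_or_eq with h | h
        · exact h
        · exfalso
          rw [← h] at hφ₀
          have h1 := hinit x₀ hx₀K
          have h2 := hnormsq (d (0, x₀))
          nlinarith [norm_nonneg (d (0, x₀))]
      have ht₀Ioc : t₀ ∈ Set.Ioc 0 T := ⟨ht₀pos, ht₀K.2⟩
      have hx₀Ω : x₀ ∈ Ω := by
        by_contra hxo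
        have hfr : x₀ ∈ frontier Ω := by
          rw [frontier_eq_closure_inter_closure]
          exact ⟨hx₀K, subset_closure hxo⟩
        have h1 := hbdry t₀ ht₀K x₀ hfr
        have h2 := hnormsq (d (t₀, x₀))
        nlinarith
      have hmem : ((t₀, x₀) : ℝ × EuclideanSpace ℝ (Fin 3)) ∈ Set.Ioc 0 T ×ˢ Ω :=
        Set.mk_mem_prod ht₀Ioc hx₀Ω
      -- spatial regularity
      have hgkC2 : ∀ k : Fin 3, ContDiffOn ℝ 2 (fun z => d (t₀, z) k) Ω := by
        intro k
        exact (EuclideanSpace.proj (𝕜 := ℝ) k).contDiff.comp_contDiffOn (hdx t₀ ht₀Ioc)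
      have hgkdiff : ∀ k : Fin 3, ∀ y ∈ Ω, DifferentiableAt ℝ (fun z => d (t₀, z) k) y :=
        fun k y hy =>
          ((hgkC2 k).differentiableOn (by norm_num)).differentiableAt (hΩo.mem_nhds hy)
      have hPdiff : ∀ j k : Fin 3,
          DifferentiableAt ℝ (fun y => pdE j (fun z => d (t₀, z) k) y) x₀ := by
        intro j k
        have h1 : ContDiffOn ℝ 1 (fderiv ℝ (fun z => d (t₀, z) k)) Ω :=
          (hgkC2 k).fderiv_of_isOpen hΩo (by norm_num)
        have h2 : ContDiffOn ℝ 1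
            (fun y => (fderiv ℝ (fun z => d (t₀, z) k) y) (EuclideanSpace.single j 1)) Ω :=
          h1.clm_apply contDiffOn_const
        simp only [pdE]
        exact (h2.differentiableOn one_ne_zero).differentiableAt (hΩo.mem_nhds hx₀Ω)
      have hφxdiff : ∀ y ∈ Ω, DifferentiableAt ℝ (fun z => ∑ k : Fin 3, (d (t₀, z) k)^2) y :=
        fun y hy => DifferentiableAt.fun_sum fun k _ => (hgkdiff k y hy).pow 2
      -- gradient identity
      have hfd : ∀ y ∈ Ω, fderiv ℝ (fun z => ∑ k : Fin 3, (d (t₀, z) k)^2) y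
          = ∑ k : Fin 3, (2 * d (t₀, y) k) • fderiv ℝ (fun z => d (t₀, z) k) y := by
        intro y hy
        apply HasFDerivAt.fderiv
        apply HasFDerivAt.fun_sum
        intro k _
        have hk := (hgkdiff k y hy).hasFDerivAt
        have h2 := hk.fun_mul hk
        simpa [pow_two, two_mul, add_smul] using h2
      have hgrad : ∀ j : Fin 3, ∀ y ∈ Ω, pdE j (fun z => ∑ k : Fin 3, (d (t₀, z) k)^2) y
          = ∑ k : Fin 3, 2 * d (t₀, y) k * pdE j (fun z => d (t₀, z) k) y := by
        intro j y hy
        simp only [pdE]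
        rw [hfd y hy]
        simp only [ContinuousLinearMap.coe_sum', Finset.sum_apply,
          ContinuousLinearMap.coe_smul', Pi.smul_apply, smul_eq_mul]
      -- max along closure in space at time t₀
      have hmaxcl : ∀ y ∈ closure Ω,
          (∑ k : Fin 3, (d (t₀, y) k)^2) ≤ ∑ k : Fin 3, (d (t₀, x₀) k)^2 := by
        intro y hy
        have := hp₀max (t₀, y) (Set.mk_mem_prod ht₀K hy)
        simpa using this
      -- lines
      have hline : ∀ (j : Fin 3) (s : ℝ),
          HasDerivAt (fun s' : ℝ => x₀ + s' • EuclideanSpace.single j (1:ℝ))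
            (EuclideanSpace.single j 1) s := by
        intro j s
        simpa using ((hasDerivAt_id s).smul_const (EuclideanSpace.single j (1:ℝ))).const_add x₀
      have hlinemem : ∀ j : Fin 3, ∀ᶠ s : ℝ in 𝓝 0,
          x₀ + s • EuclideanSpace.single j (1:ℝ) ∈ Ω := by
        intro j
        have hc : Continuous (fun s : ℝ => x₀ + s • EuclideanSpace.single j (1:ℝ)) :=
          continuous_const.add (continuous_id.smul continuous_const)
        exact hc.continuousAt.preimage_mem_nhds (by simpa using hΩo.mem_nhds hx₀Ω)
      have hqder : ∀ (j : Fin 3) (s : ℝ), x₀ + s • EuclideanSpace.single j (1:ℝ) ∈ Ω →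
          HasDerivAt (fun s' : ℝ =>
              ∑ k : Fin 3, (d (t₀, x₀ + s' • EuclideanSpace.single j (1:ℝ)) k)^2)
            (pdE j (fun z => ∑ k : Fin 3, (d (t₀, z) k)^2)
              (x₀ + s • EuclideanSpace.single j (1:ℝ))) s := by
        intro j s hs
        exact (hφxdiff _ hs).hasFDerivAt.comp_hasDerivAt s (hline j s)
      have hx0line : ∀ j : Fin 3, x₀ + (0:ℝ) • EuclideanSpace.single j (1:ℝ) = x₀ := by
        intro j; simp
      have hlocmax : ∀ j : Fin 3, IsLocalMax
          (fun s' : ℝ => ∑ k : Fin 3, (d (t₀, x₀ + s' • EuclideanSpace.single j (1:ℝ)) k)^2)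
          0 := by
        intro j
        filter_upwards [hlinemem j] with s hs
        simpa using hmaxcl _ (subset_closure hs)
      -- first derivative zero
      have hF1 : ∀ j : Fin 3, pdE j (fun z => ∑ k : Fin 3, (d (t₀, z) k)^2) x₀ = 0 := by
        intro j
        have hd0 : HasDerivAt
            (fun s' : ℝ => ∑ k : Fin 3, (d (t₀, x₀ + s' • EuclideanSpace.single j (1:ℝ)) k)^2)
            (pdE j (fun z => ∑ k : Fin 3, (d (t₀, z) k)^2) x₀) 0 := by
          have h := hqder j 0 (by rw [hx0line j]; exact hx₀Ω)
          rwa [hx0line j] at h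
        rw [← hd0.deriv]
        exact (hlocmax j).deriv_eq_zero
      -- second derivative facts
      have hF2 : ∀ j : Fin 3,
          (∑ k : Fin 3, (2 * d (t₀, x₀) k * pdE j (fun y => pdE j (fun z => d (t₀, z) k) y) x₀
            + 2 * (pdE j (fun z => d (t₀, z) k) x₀)^2)) ≤ 0 := by
        intro j
        have hQ : HasFDerivAt
            (fun y => ∑ k : Fin 3, 2 * d (t₀, y) k * pdE j (fun z => d (t₀, z) k) y)
            (∑ k : Fin 3,
              ((2 * d (t₀, x₀) k) • fderiv ℝ (fun y => pdE j (fun z => d (t₀, z) k) y) x₀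
               + (pdE j (fun z => d (t₀, z) k) x₀) •
                   ((2:ℝ) • fderiv ℝ (fun z => d (t₀, z) k) x₀))) x₀ := by
          apply HasFDerivAt.fun_sum
          intro k _
          exact (((hgkdiff k x₀ hx₀Ω).hasFDerivAt).const_mul (2:ℝ)).mul (hPdiff j k).hasFDerivAt
        set q : ℝ → ℝ := fun s' =>
          ∑ k : Fin 3, (d (t₀, x₀ + s' • EuclideanSpace.single j (1:ℝ)) k)^2 with hqdef
        have hev1 : ∀ᶠ s in 𝓝 (0:ℝ), deriv q s
            = ∑ k : Fin 3, 2 * d (t₀, x₀ + s • EuclideanSpace.single j (1:ℝ)) k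
                * pdE j (fun z => d (t₀, z) k) (x₀ + s • EuclideanSpace.single j (1:ℝ)) := by
          filter_upwards [hlinemem j] with s hs
          rw [(hqder j s hs).deriv]
          exact hgrad j _ hs
        have hQ0 : HasFDerivAt
            (fun y => ∑ k : Fin 3, 2 * d (t₀, y) k * pdE j (fun z => d (t₀, z) k) y)
            (∑ k : Fin 3,
              ((2 * d (t₀, x₀) k) • fderiv ℝ (fun y => pdE j (fun z => d (t₀, z) k) y) x₀
               + (pdE j (fun z => d (t₀, z) k) x₀) •
                   ((2:ℝ) • fderiv ℝ (fun z => d (t₀, z) k) x₀)))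
            (x₀ + (0:ℝ) • EuclideanSpace.single j (1:ℝ)) := by
          rw [hx0line j]; exact hQ
        have hQline : HasDerivAt (fun s : ℝ =>
            ∑ k : Fin 3, 2 * d (t₀, x₀ + s • EuclideanSpace.single j (1:ℝ)) k
              * pdE j (fun z => d (t₀, z) k) (x₀ + s • EuclideanSpace.single j (1:ℝ)))
            ((∑ k : Fin 3,
              ((2 * d (t₀, x₀) k) • fderiv ℝ (fun y => pdE j (fun z => d (t₀, z) k) y) x₀
               + (pdE j (fun z => d (t₀, z) k) x₀) •
                   ((2:ℝ) • fderiv ℝ (fun z => d (t₀, z) k) x₀)))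
              (EuclideanSpace.single j 1)) 0 :=
          by have := hQ0.comp_hasDerivAt 0 (hline j 0); exact this
        have hqdiff : ∀ᶠ s in 𝓝 (0:ℝ), DifferentiableAt ℝ q s := by
          filter_upwards [hlinemem j] with s hs
          exact (hqder j s hs).differentiableAt
        have hdq : DifferentiableAt ℝ (deriv q) 0 :=
          (Filter.EventuallyEq.differentiableAt_iff hev1).mpr hQline.differentiableAt
        have hle := aux_deriv2_nonpos hqdiff hdq (hlocmax j)
        have hval : ((∑ k : Fin 3,
              ((2 * d (t₀, x₀) k) • fderiv ℝ (fun y => pdE j (fun z => d (t₀, z) k) y) x₀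
               + (pdE j (fun z => d (t₀, z) k) x₀) •
                   ((2:ℝ) • fderiv ℝ (fun z => d (t₀, z) k) x₀)))
              (EuclideanSpace.single j 1))
            = ∑ k : Fin 3, (2 * d (t₀, x₀) k * pdE j (fun y => pdE j (fun z => d (t₀, z) k) y) x₀
              + 2 * (pdE j (fun z => d (t₀, z) k) x₀)^2) := by
          simp only [ContinuousLinearMap.coe_sum', Finset.sum_apply,
            ContinuousLinearMap.add_apply, ContinuousLinearMap.coe_smul', Pi.smul_apply,
            smul_eq_mul]
          refine Finset.sum_congr rfl fun k _ => ?_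
          simp only [pdE]
          ring
        have hfinal : deriv (deriv q) 0
            = ∑ k : Fin 3, (2 * d (t₀, x₀) k * pdE j (fun y => pdE j (fun z => d (t₀, z) k) y) x₀
              + 2 * (pdE j (fun z => d (t₀, z) k) x₀)^2) := by
          rw [Filter.EventuallyEq.deriv_eq hev1, hQline.deriv]
          exact hval
        rw [← hfinal]
        exact hle
      -- sign fact
      have hF3 : 0 ≤ ∑ k : Fin 3, d (t₀, x₀) k * f (d (t₀, x₀)) k := by
        have h := hsign (d (t₀, x₀)) hnorm₀
        rw [PiLp.inner_apply] at h
        simpa [RCLike.inner_apply, conj_trivial, mul_comm] using h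
      -- time derivative fact
      have hF4 : ε ≤ ∑ k : Fin 3, 2 * d (t₀, x₀) k * deriv (fun s => d (s, x₀) k) t₀ := by
        have hw : HasDerivAt (fun s => (∑ k : Fin 3, (d (s, x₀) k)^2) - ε * s)
            ((∑ k : Fin 3, 2 * d (t₀, x₀) k * deriv (fun s => d (s, x₀) k) t₀) - ε) t₀ := by
          apply HasDerivAt.sub
          · apply HasDerivAt.fun_sum
            intro k _
            have hk := (hdt (t₀, x₀) hmem k).hasDerivAt
            have h2 := hk.fun_pow 2
            norm_num at h2
            convert h2 using 1
          · simpa using (hasDerivAt_id t₀).const_mul ε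
        have hmaxt : ∀ s ∈ Set.Icc 0 t₀,
            (fun s => (∑ k : Fin 3, (d (s, x₀) k)^2) - ε * s) s
            ≤ (fun s => (∑ k : Fin 3, (d (s, x₀) k)^2) - ε * s) t₀ := by
          intro s hs
          exact hp₀max (s, x₀)
            (Set.mk_mem_prod ⟨hs.1, le_trans hs.2 ht₀K.2⟩ (subset_closure hx₀Ω))
        have h3 := aux_deriv_nonneg ht₀pos hmaxt hw.differentiableAt
        rw [hw.deriv] at h3
        linarith
      -- PDE
      have hF5 := fun k => hpde (t₀, x₀) hmem k
      dsimp only at hF5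
      have hF5' : ∀ k : Fin 3, 2 * d (t₀, x₀) k * deriv (fun s => d (s, x₀) k) t₀
          + ∑ j : Fin 3, u (t₀, x₀) j *
              (2 * d (t₀, x₀) k * pdE j (fun z => d (t₀, z) k) x₀)
          = (∑ j : Fin 3, 2 * d (t₀, x₀) k *
              pdE j (fun y => pdE j (fun z => d (t₀, z) k) y) x₀)
            - 2 * d (t₀, x₀) k * f (d (t₀, x₀)) k := by
        intro k
        have h := hF5 k
        simp only [Fin.sum_univ_three] at h ⊢
        linear_combination (2 * d (t₀, x₀) k) * h
      have hU : ∀ j : Fin 3, ∑ k : Fin 3, u (t₀, x₀) j *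
          (2 * d (t₀, x₀) k * pdE j (fun z => d (t₀, z) k) x₀) = 0 := by
        intro j
        rw [← Finset.mul_sum, ← hgrad j x₀ hx₀Ω, hF1 j, mul_zero]
      -- assemble
      have e0 := hF5' 0; have e1 := hF5' 1; have e2 := hF5' 2
      have u0 := hU 0; have u1 := hU 1; have u2 := hU 2
      have s0 := hF2 0; have s1 := hF2 1; have s2 := hF2 2
      simp only [Fin.sum_univ_three] at e0 e1 e2 u0 u1 u2 s0 s1 s2 hF3 hF4
      linarith [sq_nonneg (pdE 0 (fun z => d (t₀, z) 0) x₀),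
        sq_nonneg (pdE 0 (fun z => d (t₀, z) 1) x₀),
        sq_nonneg (pdE 0 (fun z => d (t₀, z) 2) x₀),
        sq_nonneg (pdE 1 (fun z => d (t₀, z) 0) x₀),
        sq_nonneg (pdE 1 (fun z => d (t₀, z) 1) x₀),
        sq_nonneg (pdE 1 (fun z => d (t₀, z) 2) x₀),
        sq_nonneg (pdE 2 (fun z => d (t₀, z) 0) x₀),
        sq_nonneg (pdE 2 (fun z => d (t₀, z) 1) x₀),
        sq_nonneg (pdE 2 (fun z => d (t₀, z) 2) x₀)]
    -- conclude key
    have htx := hp₀max (t, x) (Set.mk_mem_prod ht hx)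
    have h1 : (∑ k : Fin 3, (d (t, x) k)^2) - ε * t ≤ C₀^2 := le_trans htx hmain
    have h2 := hnormsq (d (t, x))
    have h3 : ε * t ≤ ε * T := by nlinarith [ht.1, ht.2]
    nlinarith
  have h2 : ‖d (t, x)‖^2 ≤ C₀^2 := by
    refine le_of_forall_pos_le_add fun η hη => ?_
    have h := key (η / T) (div_pos hη hT)
    have : η / T * T = η := div_mul_cancel₀ η hT.ne'
    linarith
  nlinarith [norm_nonneg (d (t, x))]
end

section
/- Let (Ω, μ) be a finite measure space, let b : ℝ → ℝ be convex and continuous, and let ρ_n, ρ, β be integrable functions on Ω with b ∘ ρ_n integrable for each n. Assume that for every bounded measurable φ : Ω → ℝ one has ∫_Ω ρ_n φ dμ → ∫_Ω ρ φ dμ and ∫_Ω b(ρ_n) φ dμ → ∫_Ω β φ dμ as n → ∞. Then b(ρ(x)) ≤ β(x) for μ-almost every x ∈ Ω. -/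
open MeasureTheory Filter

/-- Supporting slope of `b` at `t`: supremum of slopes of secants from the left. -/
noncomputable def stmt13sl (b : ℝ → ℝ) (t : ℝ) : ℝ :=
  sSup ((fun p => (b t - b p) / (t - p)) '' Set.Iio t)

lemma stmt13sl_mem_le {b : ℝ → ℝ} (hb : ConvexOn ℝ Set.univ b) {t u : ℝ} (htu : t < u) :
    ∀ y ∈ (fun p => (b t - b p) / (t - p)) '' Set.Iio t, y ≤ (b u - b t) / (u - t) := by
  rintro y ⟨p, hp, rfl⟩
  have := hb.slope_mono_adjacent (Set.mem_univ p) (Set.mem_univ u) hp htu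
  simpa using this

lemma stmt13sl_bdd {b : ℝ → ℝ} (hb : ConvexOn ℝ Set.univ b) (t : ℝ) :
    BddAbove ((fun p => (b t - b p) / (t - p)) '' Set.Iio t) :=
  ⟨(b (t+1) - b t) / ((t+1) - t), fun y hy => stmt13sl_mem_le hb (by linarith) y hy⟩

lemma stmt13sl_ne {b : ℝ → ℝ} (t : ℝ) :
    ((fun p => (b t - b p) / (t - p)) '' Set.Iio t).Nonempty :=
  ⟨_, ⟨t - 1, by simp, rfl⟩⟩

/-- Subgradient inequality: the supporting line at `t` is a global minorant. -/
lemma stmt13_subgrad {b : ℝ → ℝ} (hb : ConvexOn ℝ Set.univ b) (t z : ℝ) :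
    b t + stmt13sl b t * (z - t) ≤ b z := by
  rcases lt_trichotomy z t with h | h | h
  · have hmem : (b t - b z) / (t - z) ∈ (fun p => (b t - b p) / (t - p)) '' Set.Iio t :=
      ⟨z, h, rfl⟩
    have hle : (b t - b z) / (t - z) ≤ stmt13sl b t := le_csSup (stmt13sl_bdd hb t) hmem
    have htz : (0:ℝ) < t - z := by linarith
    have := (div_le_iff₀ htz).mp hle
    nlinarith
  · simp [h]
  · have hle : stmt13sl b t ≤ (b z - b t) / (z - t) :=
      csSup_le (stmt13sl_ne t) (stmt13sl_mem_le hb h)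
    have hzt : (0:ℝ) < z - t := by linarith
    have := (le_div_iff₀ hzt).mp hle
    nlinarith

/-- Lower bound on supporting slopes near a point. -/
lemma stmt13sl_lb {b : ℝ → ℝ} (hb : ConvexOn ℝ Set.univ b) {v t : ℝ} (h : v - 1 < t) :
    (b (v-1) - b (v-2)) / ((v-1) - (v-2)) ≤ stmt13sl b t := by
  have h1 : (b t - b (v-1)) / (t - (v-1)) ∈ (fun p => (b t - b p) / (t - p)) '' Set.Iio t :=
    ⟨v - 1, h, rfl⟩
  have h2 : (b t - b (v-1)) / (t - (v-1)) ≤ stmt13sl b t := le_csSup (stmt13sl_bdd hb t) h1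
  have h3 := hb.slope_mono_adjacent (Set.mem_univ (v-2)) (Set.mem_univ t) (by linarith : v-2 < v-1) h
  linarith

/-- If all rational supporting lines evaluated at `v` are `≤ c`, then `b v ≤ c`. -/
lemma stmt13_sup {b : ℝ → ℝ} (hb : ConvexOn ℝ Set.univ b) (hbc : Continuous b) {v c : ℝ}
    (h : ∀ q : ℚ, b q + stmt13sl b q * (v - (q:ℝ)) ≤ c) : b v ≤ c := by
  refine le_of_forall_pos_le_add fun ε hε => ?_
  set m : ℝ := (b (v-1) - b (v-2)) / ((v-1) - (v-2)) with hm
  obtain ⟨δ, hδ, hδc⟩ := Metric.continuous_iff.mp hbc v (ε/2) (by linarith)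
  set δ' : ℝ := min δ (min 1 (ε / (2 * (|m| + 1)))) with hδ'
  have hδ'pos : 0 < δ' := by
    refine lt_min hδ (lt_min one_pos ?_)
    positivity
  obtain ⟨q, hq1, hq2⟩ := exists_rat_btwn (show v - δ' < v by linarith)
  have hqv : |( q : ℝ) - v| < δ := by
    rw [abs_sub_lt_iff]
    constructor
    · linarith
    · have : δ' ≤ δ := min_le_left _ _
      linarith
  have hbq : |b q - b v| < ε/2 := by simpa [Real.dist_eq] using hδc q hqv
  have hslb : m ≤ stmt13sl b q := stmt13sl_lb hb (by
    have : δ' ≤ 1 := (min_le_right _ _).trans (min_le_left _ _)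
    linarith)
  have hδ'ε : δ' ≤ ε / (2 * (|m| + 1)) := (min_le_right _ _).trans (min_le_right _ _)
  have hvq : 0 < v - (q:ℝ) := by linarith
  have hvq' : v - (q:ℝ) < δ' := by linarith
  have hmlb : -(ε/2) ≤ stmt13sl b q * (v - (q:ℝ)) := by
    have h1 : m * (v - (q:ℝ)) ≤ stmt13sl b q * (v - (q:ℝ)) :=
      mul_le_mul_of_nonneg_right hslb hvq.le
    have h2 : -|m| ≤ m := neg_abs_le m
    have h3 : -(|m| + 1) * δ' ≤ m * (v - (q:ℝ)) := by nlinarith [abs_nonneg m]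
    have h4 : (|m| + 1) * δ' ≤ ε / 2 := by
      have hp : (0:ℝ) < |m| + 1 := by positivity
      calc (|m| + 1) * δ' ≤ (|m| + 1) * (ε / (2 * (|m| + 1))) := by nlinarith
        _ = ε / 2 := by field_simp
    linarith
  have := h q
  have habs := abs_sub_lt_iff.mp hbq
  linarith [habs.2]

/-- **Weak lower semicontinuity of convex functions under weak `L¹` convergence.**
If `ρ_n ⇀ ρ` and `b(ρ_n) ⇀ β` weakly in `L¹` (tested against all bounded measurable
functions) on a finite measure space, with `b` convex and continuous, then
`b(ρ) ≤ β` almost everywhere. -/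
theorem stmt13 {Ω : Type*} [MeasurableSpace Ω] (μ : Measure Ω) [IsFiniteMeasure μ]
    (b : ℝ → ℝ) (hbconv : ConvexOn ℝ Set.univ b) (hbcont : Continuous b)
    (ρn : ℕ → Ω → ℝ) (ρ β : Ω → ℝ)
    (hρn : ∀ n, Integrable (ρn n) μ) (hρ : Integrable ρ μ) (hβ : Integrable β μ)
    (hbρn : ∀ n, Integrable (fun x => b (ρn n x)) μ)
    (hweak : ∀ φ : Ω → ℝ, Measurable φ → (∃ C : ℝ, ∀ x, |φ x| ≤ C) →
      Tendsto (fun n => ∫ x, ρn n x * φ x ∂μ) atTop (nhds (∫ x, ρ x * φ x ∂μ)))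
    (hweakb : ∀ φ : Ω → ℝ, Measurable φ → (∃ C : ℝ, ∀ x, |φ x| ≤ C) →
      Tendsto (fun n => ∫ x, b (ρn n x) * φ x ∂μ) atTop (nhds (∫ x, β x * φ x ∂μ))) :
    ∀ᵐ x ∂μ, b (ρ x) ≤ β x := by
  -- Step 1: every global affine minorant of `b` passes to the weak limits.
  have key : ∀ a c : ℝ, (∀ z, a * z + c ≤ b z) → ∀ᵐ x ∂μ, a * ρ x + c ≤ β x := by
    intro a c hac
    have hint : Integrable (fun x => β x - (a * ρ x + c)) μ :=
      hβ.sub ((hρ.const_mul a).add (integrable_const c))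
    have h0 : 0 ≤ᵐ[μ] fun x => β x - (a * ρ x + c) := by
      refine ae_nonneg_of_forall_setIntegral_nonneg hint fun S hS hSfin => ?_
      set φ : Ω → ℝ := S.indicator (fun _ => (1:ℝ)) with hφ
      have hφm : Measurable φ := measurable_const.indicator hS
      have hφb : ∃ C : ℝ, ∀ x, |φ x| ≤ C := by
        refine ⟨1, fun x => ?_⟩
        by_cases hx : x ∈ S <;> simp [hφ, Set.indicator, hx]
      have hrw : ∀ f : Ω → ℝ, ∫ x, f x * φ x ∂μ = ∫ x in S, f x ∂μ := by
        intro f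
        rw [← integral_indicator hS]
        congr 1
        ext x
        by_cases hx : x ∈ S <;> simp [hφ, Set.indicator, hx]
      have h1 : Tendsto (fun n => ∫ x in S, ρn n x ∂μ) atTop (nhds (∫ x in S, ρ x ∂μ)) := by
        have := hweak φ hφm hφb
        simpa [hrw] using this
      have h2 : Tendsto (fun n => ∫ x in S, b (ρn n x) ∂μ) atTop
          (nhds (∫ x in S, β x ∂μ)) := by
        have := hweakb φ hφm hφb
        simpa [hrw] using this
      have h1' : Tendsto (fun n => a * ∫ x in S, ρn n x ∂μ + c * (μ S).toReal) atTop
          (nhds (a * ∫ x in S, ρ x ∂μ + c * (μ S).toReal)) :=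
        ((h1.const_mul a).add tendsto_const_nhds)
      have hineq : ∀ n, a * ∫ x in S, ρn n x ∂μ + c * (μ S).toReal
          ≤ ∫ x in S, b (ρn n x) ∂μ := by
        intro n
        have hi1 : Integrable (fun x => a * ρn n x + c) (μ.restrict S) :=
          (((hρn n).const_mul a).add (integrable_const c)).restrict
        have hi2 : Integrable (fun x => b (ρn n x)) (μ.restrict S) := (hbρn n).restrict
        have hmono : ∫ x in S, (a * ρn n x + c) ∂μ ≤ ∫ x in S, b (ρn n x) ∂μ :=
          integral_mono hi1 hi2 fun x => hac (ρn n x)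
        have i1 : Integrable (fun x => a * ρn n x) (μ.restrict S) :=
          ((hρn n).const_mul a).restrict
        have hcalc : ∫ x in S, (a * ρn n x + c) ∂μ
            = a * ∫ x in S, ρn n x ∂μ + c * (μ S).toReal := by
          rw [integral_add i1 (integrable_const c), integral_const_mul, setIntegral_const,
            smul_eq_mul, measureReal_def]
          ring
        linarith [hmono, hcalc.ge, hcalc.le]
      have hlim : a * ∫ x in S, ρ x ∂μ + c * (μ S).toReal ≤ ∫ x in S, β x ∂μ :=
        le_of_tendsto_of_tendsto' h1' h2 hineq
      have j1 : Integrable (fun x => a * ρ x) (μ.restrict S) := (hρ.const_mul a).restrict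
      have j2 : Integrable (fun x => a * ρ x + c) (μ.restrict S) :=
        j1.add (integrable_const c)
      have hsub : ∫ x in S, (β x - (a * ρ x + c)) ∂μ
          = ∫ x in S, β x ∂μ - (a * ∫ x in S, ρ x ∂μ + c * (μ S).toReal) := by
        rw [integral_sub hβ.restrict j2, integral_add j1 (integrable_const c),
          integral_const_mul, setIntegral_const, smul_eq_mul, measureReal_def]
        ring
      rw [hsub]
      linarith
    filter_upwards [h0] with x hx
    simpa using hx
  -- Step 2: apply to all rational supporting lines and combine.
  have hq : ∀ q : ℚ, ∀ᵐ x ∂μ,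
      stmt13sl b q * ρ x + (b q - stmt13sl b q * q) ≤ β x := by
    intro q
    refine key _ _ fun z => ?_
    have := stmt13_subgrad hbconv q z
    nlinarith [this]
  rw [← ae_all_iff] at hq
  filter_upwards [hq] with x hx
  refine stmt13_sup hbconv hbcont fun q => ?_
  have := hx q
  nlinarith [this]
end

section
/- Let (Ω, μ) be a finite measure space and let ρ_n ≥ 0 be a sequence of integrable functions on Ω such that ρ_n log ρ_n is integrable for each n (with the convention 0 · log 0 = 0). Let ρ ≥ 0 be integrable with ρ log ρ integrable, and assume that for every bounded measurable φ : Ω → ℝ one has ∫_Ω ρ_n φ dμ → ∫_Ω ρ φ dμ and ∫_Ω ρ_n log(ρ_n) φ dμ → ∫_Ω ρ log(ρ) φ dμ as n → ∞. Then ρ_n → ρ strongly in L¹(Ω), i.e. ∫_Ω |ρ_n − ρ| dμ → 0. -/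
open MeasureTheory Filter


lemma aux_sqrt (a b : ℝ) (ha : 0 ≤ a) (hb : 0 < b) :
    (Real.sqrt a - Real.sqrt b) ^ 2 ≤ a * Real.log a - a * Real.log b - a + b := by
  rcases eq_or_lt_of_le ha with h0 | h0
  · have : a = 0 := h0.symm
    subst this
    simp only [Real.sqrt_zero, Real.log_zero, zero_mul, zero_sub, neg_sq, sub_zero,
      zero_add, mul_zero]
    rw [Real.sq_sqrt hb.le]
  · have hsa : (0:ℝ) < Real.sqrt a := Real.sqrt_pos.2 h0
    have hsb : (0:ℝ) < Real.sqrt b := Real.sqrt_pos.2 hb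
    have hlog : Real.log (Real.sqrt b / Real.sqrt a) ≤ Real.sqrt b / Real.sqrt a - 1 :=
      Real.log_le_sub_one_of_pos (div_pos hsb hsa)
    rw [Real.log_div hsb.ne' hsa.ne'] at hlog
    have h1 : Real.log (Real.sqrt a) = Real.log a / 2 := Real.log_sqrt ha
    have h2 : Real.log (Real.sqrt b) = Real.log b / 2 := Real.log_sqrt hb.le
    have hdiv : a / Real.sqrt a = Real.sqrt a := Real.div_sqrt
    have hsq : Real.sqrt a ^ 2 = a := Real.sq_sqrt ha
    have hsqb : Real.sqrt b ^ 2 = b := Real.sq_sqrt hb.le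
    have key : a * Real.log a - a * Real.log b ≥ 2 * a - 2 * (Real.sqrt a * Real.sqrt b) := by
      have h3 : Real.log a / 2 - Real.log b / 2 ≥ 1 - Real.sqrt b / Real.sqrt a := by
        rw [← h1, ← h2]; linarith
      have h4 : a * (Real.log a / 2 - Real.log b / 2) ≥ a * (1 - Real.sqrt b / Real.sqrt a) :=
        mul_le_mul_of_nonneg_left h3 ha
      have h5 : a * (Real.sqrt b / Real.sqrt a) = Real.sqrt a * Real.sqrt b := by
        rw [mul_div_assoc', mul_comm a (Real.sqrt b), mul_div_assoc, hdiv, mul_comm]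
      nlinarith
    nlinarith

lemma aux_abs (a b δ : ℝ) (ha : 0 ≤ a) (hb : 0 ≤ b) (hδ : 0 < δ) :
    |a - b| ≤ δ * (a + b) + (1 / δ) * (Real.sqrt a - Real.sqrt b) ^ 2 := by
  set s := Real.sqrt a with hs
  set u := Real.sqrt b with hu
  have hs0 : 0 ≤ s := Real.sqrt_nonneg a
  have hu0 : 0 ≤ u := Real.sqrt_nonneg b
  have hsq : s ^ 2 = a := Real.sq_sqrt ha
  have husq : u ^ 2 = b := Real.sq_sqrt hb
  have key : δ * |a - b| ≤ δ ^ 2 * (a + b) + (s - u) ^ 2 := by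
    rcases le_total b a with h | h
    · rw [abs_of_nonneg (by linarith)]
      nlinarith [sq_nonneg (δ * (s + u) - (s - u)), sq_nonneg (s - u), sq_nonneg δ,
        mul_nonneg (sq_nonneg δ) (sq_nonneg (s - u))]
    · rw [abs_of_nonpos (by linarith)]
      nlinarith [sq_nonneg (δ * (s + u) + (s - u)), sq_nonneg (s - u), sq_nonneg δ,
        mul_nonneg (sq_nonneg δ) (sq_nonneg (s - u))]
  have h1 : |a - b| = (1 / δ) * (δ * |a - b|) := by field_simp
  rw [h1]
  have h2 : (1 / δ) * (δ * |a - b|) ≤ (1 / δ) * (δ ^ 2 * (a + b) + (s - u) ^ 2) :=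
    mul_le_mul_of_nonneg_left key (by positivity)
  calc (1 / δ) * (δ * |a - b|) ≤ (1 / δ) * (δ ^ 2 * (a + b) + (s - u) ^ 2) := h2
    _ = δ * (a + b) + (1 / δ) * (s - u) ^ 2 := by field_simp

lemma aux_main (a b c δ : ℝ) (ha : 0 ≤ a) (hb : 0 < b) (hc : c ≤ Real.log b) (hδ : 0 < δ) :
    |a - b| ≤ δ * (a + b) + (1 / δ) * (a * Real.log a - a * c - a + b) := by
  have h1 := aux_sqrt a b ha hb
  have h2 := aux_abs a b δ ha hb.le hδ
  have h3 : a * c ≤ a * Real.log b := mul_le_mul_of_nonneg_left hc ha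
  have h4 : (Real.sqrt a - Real.sqrt b) ^ 2 ≤ a * Real.log a - a * c - a + b := by linarith
  have h5 : (1 / δ) * (Real.sqrt a - Real.sqrt b) ^ 2 ≤ (1 / δ) * (a * Real.log a - a * c - a + b) :=
    mul_le_mul_of_nonneg_left h4 (by positivity)
  linarith

lemma aux_dom (z ε : ℝ) (hz : 0 ≤ z) (hε : 0 < ε) (hε1 : ε ≤ 1) :
    z * |Real.log (z + ε)| ≤ |Real.log ε| + 1 + z + |z * Real.log z| := by
  have hzε : 0 < z + ε := by linarith
  have habs1 : (0:ℝ) ≤ |Real.log ε| := abs_nonneg _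
  have habs2 : (0:ℝ) ≤ |z * Real.log z| := abs_nonneg _
  rcases le_total (z + ε) 1 with h | h
  · -- log(z+ε) ∈ [log ε, 0]
    have hl1 : Real.log (z + ε) ≤ 0 := Real.log_nonpos hzε.le h
    have hl2 : Real.log ε ≤ Real.log (z + ε) := Real.log_le_log hε (by linarith)
    have hl3 : Real.log ε ≤ 0 := Real.log_nonpos hε.le hε1
    have : |Real.log (z + ε)| ≤ |Real.log ε| := by
      rw [abs_of_nonpos hl1, abs_of_nonpos hl3]; linarith
    have hz1 : z ≤ 1 := by linarith
    nlinarith [abs_nonneg (Real.log (z + ε))]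
  · rcases le_total z 1 with hz1 | hz1
    · have hl1 : 0 ≤ Real.log (z + ε) := Real.log_nonneg h
      have hl2 : Real.log (z + ε) ≤ Real.log 2 := Real.log_le_log hzε (by linarith)
      have hl3 : Real.log 2 ≤ 1 := by
        have := Real.log_le_sub_one_of_pos (by norm_num : (0:ℝ) < 2); linarith
      have : |Real.log (z + ε)| ≤ 1 := by rw [abs_of_nonneg hl1]; linarith
      nlinarith
    · have hl1 : 0 ≤ Real.log (z + ε) := Real.log_nonneg (by linarith)
      have hl2 : Real.log (z + ε) ≤ Real.log (2 * z) := Real.log_le_log hzε (by linarith)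
      have hl3 : Real.log (2 * z) = Real.log 2 + Real.log z := Real.log_mul (by norm_num) (by linarith)
      have hl4 : Real.log 2 ≤ 1 := by
        have := Real.log_le_sub_one_of_pos (by norm_num : (0:ℝ) < 2); linarith
      have hlz : 0 ≤ Real.log z := Real.log_nonneg hz1
      have h6 : z * Real.log z ≤ |z * Real.log z| := le_abs_self _
      rw [abs_of_nonneg hl1]
      nlinarith

/-- **Strong `L¹` convergence from strict convexity of `z ↦ z log z`.**
If `ρ_n ≥ 0`, `ρ_n ⇀ ρ` weakly in `L¹`, and `ρ_n log ρ_n ⇀ ρ log ρ` weakly in `L¹`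
(tested against all bounded measurable functions) on a finite measure space, then
`ρ_n → ρ` strongly in `L¹`. (The convention `0 · log 0 = 0` matches `Real.log 0 = 0`.) -/
theorem stmt14 {Ω : Type*} [MeasurableSpace Ω] (μ : Measure Ω) [IsFiniteMeasure μ]
    (ρn : ℕ → Ω → ℝ) (ρ : Ω → ℝ)
    (hρn_nonneg : ∀ n, ∀ᵐ x ∂μ, 0 ≤ ρn n x) (hρ_nonneg : ∀ᵐ x ∂μ, 0 ≤ ρ x)
    (hρn : ∀ n, Integrable (ρn n) μ) (hρ : Integrable ρ μ)
    (hρnlog : ∀ n, Integrable (fun x => ρn n x * Real.log (ρn n x)) μ)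
    (hρlog : Integrable (fun x => ρ x * Real.log (ρ x)) μ)
    (hweak : ∀ φ : Ω → ℝ, Measurable φ → (∃ C : ℝ, ∀ x, |φ x| ≤ C) →
      Tendsto (fun n => ∫ x, ρn n x * φ x ∂μ) atTop (nhds (∫ x, ρ x * φ x ∂μ)))
    (hweaklog : ∀ φ : Ω → ℝ, Measurable φ → (∃ C : ℝ, ∀ x, |φ x| ≤ C) →
      Tendsto (fun n => ∫ x, (ρn n x * Real.log (ρn n x)) * φ x ∂μ) atTop
        (nhds (∫ x, (ρ x * Real.log (ρ x)) * φ x ∂μ))) :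
    Tendsto (fun n => ∫ x, |ρn n x - ρ x| ∂μ) atTop (nhds 0) := by
  -- measurable nonnegative representative of ρ
  set r : Ω → ℝ := fun x => max (hρ.1.mk ρ x) 0 with hr_def
  have hrmeas : Measurable r := hρ.1.stronglyMeasurable_mk.measurable.max measurable_const
  have hr0 : ∀ x, 0 ≤ r x := fun x => le_max_right _ 0
  have hrae : ρ =ᵐ[μ] r := by
    filter_upwards [hρ.1.ae_eq_mk, hρ_nonneg] with x h1 h2
    rw [hr_def]; simp only [← h1, max_eq_left h2]
  have hrint : Integrable r μ := hρ.congr hrae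
  have hrlog_ae : (fun x => ρ x * Real.log (ρ x)) =ᵐ[μ] (fun x => r x * Real.log (r x)) := by
    filter_upwards [hrae] with x h; rw [h]
  have hrlogint : Integrable (fun x => r x * Real.log (r x)) μ := hρlog.congr hrlog_ae
  set B : ℝ := ∫ x, ρ x ∂μ with hB_def
  have hB0 : 0 ≤ B := integral_nonneg_of_ae hρ_nonneg
  set A : ℝ := (μ Set.univ).toReal with hA_def
  have hA0 : 0 ≤ A := ENNReal.toReal_nonneg
  have hrB : ∫ x, r x ∂μ = B := (integral_congr_ae hrae).symm
  have hrlogB : ∫ x, r x * Real.log (r x) ∂μ = ∫ x, ρ x * Real.log (ρ x) ∂μ :=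
    (integral_congr_ae hrlog_ae).symm
  -- limits with φ = 1
  have L1 : Tendsto (fun n => ∫ x, ρn n x ∂μ) atTop (nhds B) := by
    have := hweak (fun _ => (1:ℝ)) measurable_const ⟨1, fun x => by norm_num⟩
    simpa using this
  have L3 : Tendsto (fun n => ∫ x, ρn n x * Real.log (ρn n x) ∂μ) atTop
      (nhds (∫ x, ρ x * Real.log (ρ x) ∂μ)) := by
    have := hweaklog (fun _ => (1:ℝ)) measurable_const ⟨1, fun x => by norm_num⟩
    simpa using this
  -- main quantitative claim
  have main : ∀ η : ℝ, 0 < η → ∀ᶠ n in atTop, (∫ x, |ρn n x - ρ x| ∂μ) ≤ η := by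
    intro η hη
    set δ : ℝ := η / (3 * (2 * B + A + 2)) with hδ_def
    have hδ : 0 < δ := by positivity
    have hδ1 : δ * (2 * B + A + 2) = η / 3 := by
      rw [hδ_def]; field_simp
    set ε : ℝ := min 1 (min (η / (3 * (A + 1))) (η * δ / (3 * (A + 2)))) with hε_def
    have hε : 0 < ε := by
      apply lt_min one_pos; apply lt_min <;> positivity
    have hε1 : ε ≤ 1 := min_le_left _ _
    have hεA : ε * A ≤ η / 3 := by
      have h1 : ε ≤ η / (3 * (A + 1)) := le_trans (min_le_right _ _) (min_le_left _ _)
      have h2 : ε * A ≤ (η / (3 * (A + 1))) * (A + 1) := by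
        apply mul_le_mul h1 (by linarith) hA0 (by positivity)
      have h3 : (η / (3 * (A + 1))) * (A + 1) = η / 3 := by field_simp
      linarith
    have hεδ : (1 / δ) * (ε * (A + 2)) ≤ η / 3 := by
      have h1 : ε ≤ η * δ / (3 * (A + 2)) := le_trans (min_le_right _ _) (min_le_right _ _)
      have h2 : ε * (A + 2) ≤ (η * δ / (3 * (A + 2))) * (A + 2) :=
        mul_le_mul_of_nonneg_right h1 (by linarith)
      have h3 : (η * δ / (3 * (A + 2))) * (A + 2) = η * δ / 3 := by field_simp
      have h4 : (1 / δ) * (ε * (A + 2)) ≤ (1 / δ) * (η * δ / 3) := by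
        apply mul_le_mul_of_nonneg_left (by linarith) (by positivity)
      have h5 : (1 / δ) * (η * δ / 3) = η / 3 := by field_simp
      linarith
    -- the shifted reference density b = r + ε
    set b : Ω → ℝ := fun x => r x + ε with hb_def
    have hbpos : ∀ x, 0 < b x := fun x => by
      have := hr0 x; rw [hb_def]; dsimp only; linarith
    have hbmeas : Measurable b := hrmeas.add measurable_const
    have hbint : Integrable b μ := hrint.add (integrable_const ε)
    have hIb : ∫ x, b x ∂μ = B + ε * A := by
      rw [hb_def]
      rw [integral_add hrint (integrable_const ε), hrB, integral_const]
      rw [smul_eq_mul, measureReal_def, hA_def]; ring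
    -- integrability of r log b via domination
    set g : Ω → ℝ := fun x => |Real.log ε| + 1 + r x + |r x * Real.log (r x)| with hg_def
    have hgint : Integrable g μ := by
      apply Integrable.add
      · exact (integrable_const _).add hrint
      · exact hrlogint.abs
    have hdom : ∀ x, ∀ c : ℝ, |c| ≤ |Real.log (b x)| → ‖r x * c‖ ≤ g x := by
      intro x c hc
      have h1 : ‖r x * c‖ = r x * |c| := by
        rw [Real.norm_eq_abs, abs_mul, abs_of_nonneg (hr0 x)]
      have h2 : r x * |c| ≤ r x * |Real.log (b x)| :=
        mul_le_mul_of_nonneg_left hc (hr0 x)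
      have h3 : r x * |Real.log (r x + ε)| ≤ |Real.log ε| + 1 + r x + |r x * Real.log (r x)| :=
        aux_dom (r x) ε (hr0 x) hε hε1
      rw [h1]; rw [hb_def] at h2; exact le_trans h2 h3
    have hrlogb_int : Integrable (fun x => r x * Real.log (b x)) μ := by
      apply Integrable.mono' hgint
      · exact (hrmeas.mul (Real.measurable_log.comp hbmeas)).aestronglyMeasurable
      · exact Eventually.of_forall fun x => hdom x _ le_rfl
    -- dominated convergence in the truncation level k
    have hklim : Tendsto (fun k : ℕ => ∫ x, r x * min (Real.log (b x)) (k : ℝ) ∂μ) atTop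
        (nhds (∫ x, r x * Real.log (b x) ∂μ)) := by
      apply tendsto_integral_of_dominated_convergence g _ hgint
      · intro k
        apply Eventually.of_forall
        intro x
        apply hdom
        rw [abs_le]
        constructor
        · apply le_min
          · exact neg_abs_le _
          · exact le_trans (neg_nonpos_of_nonneg (abs_nonneg _)) (Nat.cast_nonneg k)
        · exact le_trans (min_le_left _ _) (le_abs_self _)
      · apply Eventually.of_forall
        intro x
        have hev : ∀ᶠ k : ℕ in atTop, (fun k : ℕ => r x * min (Real.log (b x)) (k : ℝ)) k
            = (fun _ : ℕ => r x * Real.log (b x)) k := by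
          filter_upwards [tendsto_natCast_atTop_atTop.eventually_ge_atTop (Real.log (b x))]
            with k hk
          simp only [min_eq_left hk]
        exact Tendsto.congr' (EventuallyEq.symm hev) tendsto_const_nhds
      · intro k
        exact ((hrmeas.mul ((Real.measurable_log.comp hbmeas).min
          measurable_const))).aestronglyMeasurable
    -- choose truncation level k
    rw [Metric.tendsto_atTop] at hklim
    obtain ⟨k, hk⟩ := hklim ε hε
    have hkk := hk k le_rfl
    rw [Real.dist_eq] at hkk
    have hkchoice : ∫ x, r x * Real.log (b x) ∂μ - ∫ x, r x * min (Real.log (b x)) (k:ℝ) ∂μ ≤ ε := by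
      have := abs_lt.1 hkk
      linarith [this.1]
    set φ : Ω → ℝ := fun x => min (Real.log (b x)) (k : ℝ) with hφ_def
    have hφmeas : Measurable φ := (Real.measurable_log.comp hbmeas).min measurable_const
    have hφle : ∀ x, φ x ≤ Real.log (b x) := fun x => min_le_left _ _
    have hφlb : ∀ x, Real.log ε ≤ Real.log (b x) := fun x =>
      Real.log_le_log hε (by simp only [hb_def]; linarith [hr0 x])
    have hφbdd : ∃ C : ℝ, ∀ x, |φ x| ≤ C := by
      refine ⟨|Real.log ε| + k, fun x => ?_⟩
      rw [abs_le]
      constructor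
      · have h1 : Real.log (b x) ≥ -(|Real.log ε| + k) := by
          have := hφlb x
          have h2 : -|Real.log ε| ≤ Real.log ε := neg_abs_le _
          have : (0:ℝ) ≤ k := Nat.cast_nonneg k
          linarith [hφlb x, neg_abs_le (Real.log ε)]
        have h2 : (k:ℝ) ≥ -(|Real.log ε| + k) := by
          have : (0:ℝ) ≤ k := Nat.cast_nonneg k
          linarith [abs_nonneg (Real.log ε)]
        exact le_min h1 h2
      · exact le_trans (min_le_right _ _) (by linarith [abs_nonneg (Real.log ε)])
    -- weak convergence against φ
    have L2 : Tendsto (fun n => ∫ x, ρn n x * φ x ∂μ) atTop (nhds (∫ x, ρ x * φ x ∂μ)) :=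
      hweak φ hφmeas hφbdd
    have hJr : ∫ x, ρ x * φ x ∂μ = ∫ x, r x * φ x ∂μ := by
      apply integral_congr_ae
      filter_upwards [hrae] with x h; rw [h]
    -- the limit of the entropy-dissipation functional
    have LT : Tendsto (fun n => (∫ x, ρn n x * Real.log (ρn n x) ∂μ)
        - (∫ x, ρn n x * φ x ∂μ) - (∫ x, ρn n x ∂μ)) atTop
        (nhds ((∫ x, ρ x * Real.log (ρ x) ∂μ) - (∫ x, ρ x * φ x ∂μ) - B)) :=
      (L3.sub L2).sub L1
    -- bound on limit value
    have hrmono : ∫ x, r x * Real.log (r x) ∂μ ≤ ∫ x, r x * Real.log (b x) ∂μ := by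
      apply integral_mono_ae hrlogint hrlogb_int
      apply Eventually.of_forall
      intro x
      rcases eq_or_lt_of_le (hr0 x) with h | h
      · simp [← h]
      · exact mul_le_mul_of_nonneg_left
          (Real.log_le_log h (by rw [hb_def]; dsimp only; linarith)) (hr0 x)
    have hTbound : (∫ x, ρ x * Real.log (ρ x) ∂μ) - (∫ x, ρ x * φ x ∂μ) - B
        + (B + ε * A) ≤ ε * (A + 1) := by
      rw [hJr, ← hrlogB]
      have h1 : ∫ x, r x * φ x ∂μ = ∫ x, r x * min (Real.log (b x)) (k:ℝ) ∂μ := rfl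
      rw [h1]
      linarith [hrmono, hkchoice]
    -- eventual bounds in n
    have E1 : ∀ᶠ n in atTop, ∫ x, ρn n x ∂μ ≤ B + 1 :=
      L1.eventually (eventually_le_nhds (lt_add_one B))
    have E2 : ∀ᶠ n in atTop, (∫ x, ρn n x * Real.log (ρn n x) ∂μ)
        - (∫ x, ρn n x * φ x ∂μ) - (∫ x, ρn n x ∂μ)
        ≤ ((∫ x, ρ x * Real.log (ρ x) ∂μ) - (∫ x, ρ x * φ x ∂μ) - B) + ε :=
      LT.eventually (eventually_le_nhds (by linarith))
    filter_upwards [E1, E2] with n h1 h2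
    -- integrability facts for this n
    have hint_φ : Integrable (fun x => ρn n x * φ x) μ := by
      obtain ⟨C, hC⟩ := hφbdd
      have := Integrable.bdd_mul (hρn n) hφmeas.aestronglyMeasurable
        (c := C) (Eventually.of_forall fun x => by rw [Real.norm_eq_abs]; exact hC x)
      exact this.congr (Eventually.of_forall fun x => mul_comm _ _)
    -- pointwise inequality
    have hptwise : ∀ᵐ x ∂μ, |ρn n x - b x| ≤ δ * (ρn n x + b x)
        + (1/δ) * (ρn n x * Real.log (ρn n x) - ρn n x * φ x - ρn n x + b x) := by
      filter_upwards [hρn_nonneg n] with x hx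
      exact aux_main (ρn n x) (b x) (φ x) δ hx (hbpos x) (hφle x) hδ
    have iA : Integrable (fun x => ρn n x + b x) μ := (hρn n).add hbint
    have iB : Integrable (fun x => ρn n x * Real.log (ρn n x) - ρn n x * φ x) μ :=
      (hρnlog n).sub hint_φ
    have iC : Integrable (fun x => ρn n x * Real.log (ρn n x) - ρn n x * φ x - ρn n x) μ :=
      iB.sub (hρn n)
    have iD : Integrable
        (fun x => ρn n x * Real.log (ρn n x) - ρn n x * φ x - ρn n x + b x) μ := iC.add hbint
    have iE : Integrable (fun x => δ * (ρn n x + b x)) μ := iA.const_mul δ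
    have iF : Integrable
        (fun x => (1/δ) * (ρn n x * Real.log (ρn n x) - ρn n x * φ x - ρn n x + b x)) μ :=
      iD.const_mul (1/δ)
    have hRHSint : Integrable (fun x => δ * (ρn n x + b x)
        + (1/δ) * (ρn n x * Real.log (ρn n x) - ρn n x * φ x - ρn n x + b x)) μ := iE.add iF
    have habsint : Integrable (fun x => |ρn n x - b x|) μ := ((hρn n).sub hbint).abs
    have hmono := integral_mono_ae habsint hRHSint hptwise
    have hsplit : ∫ x, (δ * (ρn n x + b x)
        + (1/δ) * (ρn n x * Real.log (ρn n x) - ρn n x * φ x - ρn n x + b x)) ∂μ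
        = δ * ((∫ x, ρn n x ∂μ) + (B + ε * A))
        + (1/δ) * ((∫ x, ρn n x * Real.log (ρn n x) ∂μ) - (∫ x, ρn n x * φ x ∂μ)
            - (∫ x, ρn n x ∂μ) + (B + ε * A)) := by
      rw [integral_add iE iF, integral_const_mul, integral_const_mul,
        integral_add (hρn n) hbint, integral_add iC hbint,
        integral_sub iB (hρn n), integral_sub (hρnlog n) hint_φ, hIb]
    rw [hsplit] at hmono
    -- triangle inequality
    have htri : ∫ x, |ρn n x - ρ x| ∂μ ≤ (∫ x, |ρn n x - b x| ∂μ) + ε * A := by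
      have hbρ : ∫ x, |b x - ρ x| ∂μ = ε * A := by
        have : (fun x => |b x - ρ x|) =ᵐ[μ] fun _ => ε := by
          filter_upwards [hrae] with x h
          rw [hb_def]; dsimp only; rw [h]
          simp [abs_of_nonneg hε.le]
        rw [integral_congr_ae this, integral_const, smul_eq_mul, measureReal_def, hA_def]; ring
      have hptri : ∀ᵐ x ∂μ, |ρn n x - ρ x| ≤ |ρn n x - b x| + |b x - ρ x| :=
        Eventually.of_forall fun x => abs_sub_le _ _ _
      have j1 : Integrable (fun x => |ρn n x - b x|) μ := ((hρn n).sub hbint).abs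
      have j2 : Integrable (fun x => |b x - ρ x|) μ := (hbint.sub hρ).abs
      have j0 : Integrable (fun x => |ρn n x - ρ x|) μ := ((hρn n).sub hρ).abs
      have j3 : Integrable (fun x => |ρn n x - b x| + |b x - ρ x|) μ := j1.add j2
      have := integral_mono_ae j0 j3 hptri
      rw [integral_add j1 j2, hbρ] at this
      exact this
    -- final numeric assembly
    have hK : ∫ x, ρn n x ∂μ ≤ B + 1 := h1
    have hT : (∫ x, ρn n x * Real.log (ρn n x) ∂μ) - (∫ x, ρn n x * φ x ∂μ)
        - (∫ x, ρn n x ∂μ) + (B + ε * A) ≤ ε * (A + 2) := by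
      linarith [hTbound, h2]
    have hterm1 : δ * ((∫ x, ρn n x ∂μ) + (B + ε * A)) ≤ η / 3 := by
      have hεA1 : ε * A ≤ A := by
        have := mul_le_mul_of_nonneg_right hε1 hA0
        linarith
      have : (∫ x, ρn n x ∂μ) + (B + ε * A) ≤ 2 * B + A + 2 := by
        linarith
      calc δ * ((∫ x, ρn n x ∂μ) + (B + ε * A)) ≤ δ * (2 * B + A + 2) :=
            mul_le_mul_of_nonneg_left this hδ.le
        _ = η / 3 := hδ1
    have hterm2 : (1/δ) * ((∫ x, ρn n x * Real.log (ρn n x) ∂μ) - (∫ x, ρn n x * φ x ∂μ)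
        - (∫ x, ρn n x ∂μ) + (B + ε * A)) ≤ η / 3 := by
      have := mul_le_mul_of_nonneg_left hT (by positivity : (0:ℝ) ≤ 1/δ)
      linarith [hεδ]
    linarith [htri, hmono, hterm1, hterm2, hεA]
  -- conclude
  rw [Metric.tendsto_atTop]
  intro εf hεf
  have := main (εf / 2) (by linarith)
  rw [eventually_atTop] at this
  obtain ⟨N, hN⟩ := this
  refine ⟨N, fun n hn => ?_⟩
  rw [Real.dist_eq, sub_zero, abs_of_nonneg (integral_nonneg fun x => abs_nonneg _)]
  linarith [hN n hn]
end
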